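/- The function d on (ℕ_{≥1} × ℕ_{≥1}) × (ℕ_{≥1} × ℕ_{≥1}) defined by d((n,m),(n',m')) = 0 if n = n' and m = m'; 0 if n = n', min{m,m'} = 1 and max{m,m'} > n; 0 if n = n' and min{m,m'} > n; 2^{−n} if n = n' and none of the previous cases hold; and 2·∑_{k=min{n,n'}}^{max{n,n'}} k^{−2} if n ≠ n', is a pseudometric: it is symmetric, vanishes on the diagonal, and satisfies the triangle inequality d((n,m),(n'',m'')) ≤ d((n,m),(n',m')) + d((n',m'),(n'',m'')) for all points. -/

import Mathlib

open Finset

/-- The distance function on `ℕ≥1 × ℕ≥1` from the paper: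
`d((n,m),(n',m')) = 0` if `n = n'` and `m = m'`; `0` if `n = n'`, `min{m,m'} = 1` and
`max{m,m'} > n`; `0` if `n = n'` and `min{m,m'} > n`; `2^{-n}` if `n = n'` and none of the
previous cases hold; and `2·∑_{k=min{n,n'}}^{max{n,n'}} k^{-2}` if `n ≠ n'`. -/
noncomputable def starExDist (p q : ℕ+ × ℕ+) : ℝ :=
  if p.1 = q.1 then
    if p.2 = q.2 then 0
    else if min p.2 q.2 = 1 ∧ (p.1 : ℕ) < (max p.2 q.2 : ℕ) then 0
    else if (p.1 : ℕ) < (min p.2 q.2 : ℕ) then 0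
    else (1 / 2 : ℝ) ^ (p.1 : ℕ)
  else 2 * ∑ k ∈ Finset.Icc ((min p.1 q.1 : ℕ+) : ℕ) ((max p.1 q.1 : ℕ+) : ℕ), ((k : ℝ) ^ 2)⁻¹

/-!
Inside a fibre `{n} × ℕ+` the distance is `2⁻ⁿ` times the indicator of the complement of the
equivalence relation "equal, or both second coordinates in `{1} ∪ (n, ∞)`", hence an ultrametric
there. Across fibres it is `2 ∑_{k ∈ [n, n']} k⁻²`, subadditive because `[n, n'']` is covered by
`[n, n']` and `[n', n'']`. In the one mixed case of the triangle inequality, `p` and `r` in the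
fibre over `n` and `q` elsewhere, the bound `2⁻ⁿ ≤ 4 n⁻²` compares `d(p, r)` with the term `k = n`
that occurs in both `d(p, q)` and `d(q, r)`.
-/

theorem sum_uIcc_le_add {α M : Type*} [LinearOrder α] [LocallyFiniteOrder α]
    [AddCommMonoid M] [PartialOrder M] [IsOrderedAddMonoid M] {f : α → M} (hf : 0 ≤ f)
    (a b c : α) :
    ∑ k ∈ uIcc a c, f k ≤ ∑ k ∈ uIcc a b, f k + ∑ k ∈ uIcc b c, f k := by
  classical
  calc ∑ k ∈ uIcc a c, f k
      ≤ ∑ k ∈ uIcc a b ∪ uIcc b c, f k :=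
        sum_le_sum_of_subset_of_nonneg uIcc_subset_uIcc_union_uIcc fun k _ _ => hf k
    _ ≤ ∑ k ∈ uIcc a b ∪ uIcc b c, f k + ∑ k ∈ uIcc a b ∩ uIcc b c, f k :=
        le_add_of_nonneg_right (sum_nonneg fun k _ => hf k)
    _ = _ := sum_union_inter

theorem sq_le_two_pow_add_two (n : ℕ) : n ^ 2 ≤ 2 ^ (n + 2) := by
  induction n with
  | zero => norm_num
  | succ k ih =>
    have := k.lt_two_pow_self
    rw [pow_succ 2 (k + 2), pow_add 2 k 2] at *
    nlinarith

theorem half_pow_le_four_mul_inv_sq {n : ℕ} (hn : n ≠ 0) :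
    (1 / 2 : ℝ) ^ n ≤ 4 * ((n : ℝ) ^ 2)⁻¹ := by
  have hsq : (n : ℝ) ^ 2 ≤ 2 ^ n * 4 := by
    exact_mod_cast (sq_le_two_pow_add_two n).trans_eq (pow_add 2 n 2)
  rw [one_div_pow, ← div_eq_mul_inv, div_le_div_iff₀ (by positivity) (by positivity)]
  linarith

noncomputable def invSqSum (a b : ℕ) : ℝ := ∑ k ∈ uIcc a b, ((k : ℝ) ^ 2)⁻¹

theorem invSqSum_comm (a b : ℕ) : invSqSum a b = invSqSum b a := by
  rw [invSqSum, invSqSum, uIcc_comm]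

theorem invSqSum_triangle (a b c : ℕ) : invSqSum a c ≤ invSqSum a b + invSqSum b c :=
  sum_uIcc_le_add (fun _ => by positivity) a b c

theorem inv_sq_le_invSqSum (a b : ℕ) : ((a : ℝ) ^ 2)⁻¹ ≤ invSqSum a b :=
  single_le_sum (f := fun k : ℕ => ((k : ℝ) ^ 2)⁻¹) (fun _ _ => by positivity) left_mem_uIcc

def IsCollapsed (p : ℕ+ × ℕ+) : Prop := p.2 = 1 ∨ (p.1 : ℕ) < p.2

instance : DecidablePred IsCollapsed := fun _ => instDecidableOr

theorem starExDist_of_fst_eq {p q : ℕ+ × ℕ+} (h : p.1 = q.1) :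
    starExDist p q =
      if p = q ∨ IsCollapsed p ∧ IsCollapsed q then 0 else (1 / 2 : ℝ) ^ (p.1 : ℕ) := by
  obtain ⟨n, m⟩ := p
  obtain ⟨n', m'⟩ := q
  dsimp only at h
  subst h
  have hm := m.pos
  have hm' := m'.pos
  simp only [starExDist, if_true, IsCollapsed, Prod.mk.injEq, true_and, ← PNat.coe_inj,
    PNat.one_coe]
  rw [show ((min m m' : ℕ+) : ℕ) = min (m : ℕ) m' from rfl]
  split_ifs <;> first | rfl | omega

theorem starExDist_of_fst_ne {p q : ℕ+ × ℕ+} (h : p.1 ≠ q.1) :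
    starExDist p q = 2 * invSqSum p.1 q.1 :=
  if_neg h

theorem starExDist_nonneg (p q : ℕ+ × ℕ+) : 0 ≤ starExDist p q := by
  unfold starExDist
  split_ifs <;> positivity

theorem starExDist_self (p : ℕ+ × ℕ+) : starExDist p p = 0 := by
  rw [starExDist_of_fst_eq rfl, if_pos (Or.inl rfl)]

theorem starExDist_comm (p q : ℕ+ × ℕ+) : starExDist p q = starExDist q p := by
  by_cases h : p.1 = q.1
  · rw [starExDist_of_fst_eq h, starExDist_of_fst_eq h.symm, h]
    exact if_congr (or_congr eq_comm and_comm) rfl rfl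
  · rw [starExDist_of_fst_ne h, starExDist_of_fst_ne (Ne.symm h), invSqSum_comm]

theorem starExDist_le_half_pow {p q : ℕ+ × ℕ+} (h : p.1 = q.1) :
    starExDist p q ≤ (1 / 2 : ℝ) ^ (p.1 : ℕ) := by
  rw [starExDist_of_fst_eq h]
  split_ifs
  exacts [by positivity, le_rfl]

theorem starExDist_triangle_of_fst_eq {p q r : ℕ+ × ℕ+} (hpq : p.1 = q.1) (hqr : q.1 = r.1) :
    starExDist p r ≤ starExDist p q + starExDist q r := by
  have hzero_trans : (p = q ∨ IsCollapsed p ∧ IsCollapsed q) →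
      (q = r ∨ IsCollapsed q ∧ IsCollapsed r) → p = r ∨ IsCollapsed p ∧ IsCollapsed r := by
    rintro (rfl | ⟨hp, hq⟩) (rfl | ⟨hq', hr⟩) <;> tauto
  rw [starExDist_of_fst_eq (hpq.trans hqr)]
  split_ifs with hpr
  · exact add_nonneg (starExDist_nonneg p q) (starExDist_nonneg q r)
  have hpow : 0 ≤ (1 / 2 : ℝ) ^ (p.1 : ℕ) := by positivity
  rw [starExDist_of_fst_eq hpq, starExDist_of_fst_eq hqr, ← hpq]
  split_ifs with h₁ h₂ h₂
  · exact absurd (hzero_trans h₁ h₂) hpr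
  all_goals linarith

theorem starExDist_triangle_of_fst_eq_of_ne {p q r : ℕ+ × ℕ+} (hpr : p.1 = r.1)
    (hpq : p.1 ≠ q.1) : starExDist p r ≤ starExDist p q + starExDist q r := by
  rw [starExDist_of_fst_ne hpq, starExDist_of_fst_ne fun hqr => hpq (hpr.trans hqr.symm), ← hpr,
    invSqSum_comm q.1]
  calc starExDist p r ≤ (1 / 2 : ℝ) ^ (p.1 : ℕ) := starExDist_le_half_pow hpr
    _ ≤ 4 * (((p.1 : ℕ) : ℝ) ^ 2)⁻¹ := half_pow_le_four_mul_inv_sq p.1.ne_zero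
    _ ≤ 4 * invSqSum p.1 q.1 := by gcongr; exact inv_sq_le_invSqSum _ _
    _ = 2 * invSqSum p.1 q.1 + 2 * invSqSum p.1 q.1 := by ring

theorem starExDist_triangle (p q r : ℕ+ × ℕ+) :
    starExDist p r ≤ starExDist p q + starExDist q r := by
  by_cases hpq : p.1 = q.1 <;> by_cases hqr : q.1 = r.1
  · exact starExDist_triangle_of_fst_eq hpq hqr
  · rw [starExDist_of_fst_ne (hpq ▸ hqr), starExDist_of_fst_ne hqr, hpq]
    linarith [starExDist_nonneg p q]
  · rw [starExDist_of_fst_ne (hqr ▸ hpq), starExDist_of_fst_ne hpq, hqr]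
    linarith [starExDist_nonneg q r]
  · by_cases hpr : p.1 = r.1
    · exact starExDist_triangle_of_fst_eq_of_ne hpr hpq
    · rw [starExDist_of_fst_ne hpr, starExDist_of_fst_ne hpq, starExDist_of_fst_ne hqr]
      linarith [invSqSum_triangle p.1 q.1 r.1]

/-- The function `starExDist` is a pseudometric on `ℕ≥1 × ℕ≥1`: it is
nonnegative, vanishes on the diagonal, is symmetric, and satisfies the triangle inequality. -/
theorem starExDist_pseudometric :
    (∀ p : ℕ+ × ℕ+, starExDist p p = 0) ∧
    (∀ p q : ℕ+ × ℕ+, 0 ≤ starExDist p q) ∧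
    (∀ p q : ℕ+ × ℕ+, starExDist p q = starExDist q p) ∧
    (∀ p q r : ℕ+ × ℕ+, starExDist p r ≤ starExDist p q + starExDist q r) :=
  ⟨starExDist_self, starExDist_nonneg, starExDist_comm, starExDist_triangle⟩
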